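/- arXiv:2005.10624 — 2 statements merged into one kernel-verified Lean document; each statement's English description precedes it below -/
import Mathlib

section
/- Let X ∈ ℝ^{t×d} with rows x₁,...,x_t, let θ ∈ ℝ^d, and suppose the rewards are r = Xθ + η with η ∼ N(0, I_t). Let Z = XᵀX be invertible with λ_min(Z) ≥ R², and fix x ∈ ℝ^d with ‖x‖₂ ≤ R. Define w = X Z^{-1} x and let ξ ∼ N(0, 1-‖w‖₂²) be independent of η. Then rᵀw + ξ has distribution N(θᵀx, 1). -/
open MeasureTheory ProbabilityTheory Real Matrix
open scoped NNReal

/-! Write `y = Z⁻¹ x`, so that `w = X y` and `Xᵀ w = x`. Then `rᵀ w = θᵀ x + ηᵀ w` and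
`‖w‖² = yᵀ Z y = yᵀ x`. The eigenvalue bound and Cauchy–Schwarz give `yᵀ x ≤ 1`, so the
variance `1 - ‖w‖²` of `ξ` is not truncated, and `ηᵀ w + ξ` is a sum of independent centred Gaussians of total variance `1`. -/

namespace ProbabilityTheory

variable {Ω ι : Type*} {mΩ : MeasurableSpace Ω} {μ : Measure Ω}

lemma aemeasurable_of_map_eq_gaussianReal {X : Ω → ℝ} {m : ℝ} {v : ℝ≥0}
    (hX : μ.map X = gaussianReal m v) : AEMeasurable X μ :=
  AEMeasurable.of_map_ne_zero (by simp [hX, NeZero.ne])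

lemma iIndepFun.map_finsetSum_eq_gaussianReal [IsProbabilityMeasure μ] {X : ι → Ω → ℝ}
    (hindep : iIndepFun X μ) {m : ι → ℝ} {v : ι → ℝ≥0}
    (hX : ∀ i, μ.map (X i) = gaussianReal (m i) (v i)) (s : Finset ι) :
    μ.map (fun ω ↦ ∑ i ∈ s, X i ω) = gaussianReal (∑ i ∈ s, m i) (∑ i ∈ s, v i) := by
  classical
  induction s using Finset.cons_induction with
  | empty => simp [Measure.map_const, gaussianReal_zero_var]
  | cons a s ha ih =>
    have hindep_a : IndepFun (X a) (∑ i ∈ s, X i) μ :=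
      (hindep.indepFun_finsetSum_of_notMem₀
        (fun i ↦ aemeasurable_of_map_eq_gaussianReal (hX i)) ha).symm
    rw [Finset.sum_fn] at hindep_a
    simp only [Finset.sum_cons]
    exact gaussianReal_add_gaussianReal_of_indepFun hindep_a (hX a) ih

lemma map_sum_add_mul_add_eq_gaussianReal [Fintype ι] [IsProbabilityMeasure μ]
    {η : ι → Ω → ℝ} (hη : iIndepFun η μ) (hη_law : ∀ i, μ.map (η i) = gaussianReal 0 1)
    {ξ : Ω → ℝ} {v : ℝ≥0} (hξ_law : μ.map ξ = gaussianReal 0 v)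
    (hηξ : IndepFun (fun ω i ↦ η i ω) ξ μ) (c w : ι → ℝ) :
    μ.map (fun ω ↦ ∑ i, (c i + η i ω) * w i + ξ ω) =
      gaussianReal (c ⬝ᵥ w) ((∑ i, w i ^ 2).toNNReal + v) := by
  have hterm : ∀ i, μ.map (fun ω ↦ (c i + η i ω) * w i) =
      gaussianReal (w i * (0 + c i)) (⟨w i ^ 2, sq_nonneg _⟩ * 1) := fun i ↦
    (gaussianReal_mul_const (gaussianReal_const_add
      ⟨aemeasurable_of_map_eq_gaussianReal (hη_law i), hη_law i⟩ _) (w i)).map_eq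
  have hindep_terms : iIndepFun (fun i ω ↦ (c i + η i ω) * w i) μ :=
    hη.comp (fun i u ↦ (c i + u) * w i) (fun i ↦ by fun_prop)
  have hsum := hindep_terms.map_finsetSum_eq_gaussianReal hterm Finset.univ
  have hφ : Measurable fun u : ι → ℝ ↦ ∑ i, (c i + u i) * w i := by fun_prop
  have hindep_sum : IndepFun (fun ω ↦ ∑ i, (c i + η i ω) * w i) ξ μ :=
    hηξ.comp hφ measurable_id
  change μ.map ((fun ω ↦ ∑ i, (c i + η i ω) * w i) + ξ) = _
  convert gaussianReal_add_gaussianReal_of_indepFun hindep_sum hsum hξ_law using 2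
  · simp only [dotProduct, zero_add, add_zero, mul_comm]
  · ext
    rw [NNReal.coe_add, NNReal.coe_add, NNReal.coe_sum,
      Real.coe_toNNReal _ (Finset.sum_nonneg fun i _ ↦ sq_nonneg (w i))]
    change ∑ i, w i ^ 2 + v = ∑ i, w i ^ 2 * 1 + v
    simp only [mul_one]

end ProbabilityTheory

namespace Matrix

variable {m n : Type*} [Fintype m] [Fintype n]

lemma sum_sq_mulVec (X : Matrix m n ℝ) (y : n → ℝ) :
    ∑ j, (X *ᵥ y) j ^ 2 = y ⬝ᵥ (Xᵀ * X) *ᵥ y := by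
  rw [← mulVec_mulVec, dotProduct_transpose_mulVec]
  simp only [dotProduct, sq]

lemma dotProduct_le_one_of_mulVec_eq {Z : Matrix n n ℝ} {R : ℝ}
    (hZ : ∀ y : n → ℝ, R ^ 2 * (∑ i, y i ^ 2) ≤ y ⬝ᵥ Z *ᵥ y) {x y : n → ℝ}
    (hZy : Z *ᵥ y = x) (hx : ∑ i, x i ^ 2 ≤ R ^ 2) : y ⬝ᵥ x ≤ 1 := by
  have hlower : R ^ 2 * ∑ i, y i ^ 2 ≤ y ⬝ᵥ x := hZy ▸ hZ y
  have hcauchy : (y ⬝ᵥ x) ^ 2 ≤ (∑ i, y i ^ 2) * ∑ i, x i ^ 2 :=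
    Finset.sum_mul_sq_le_sq_mul_sq _ _ _
  have hy : 0 ≤ ∑ i, y i ^ 2 := by positivity
  -- `(y ⬝ᵥ x)² ≤ R² ‖y‖² ≤ y ⬝ᵥ x`
  nlinarith [mul_le_mul_of_nonneg_left hx hy]

end Matrix

theorem stmt_17_general {Ω : Type*} [MeasurableSpace Ω] (μ : Measure Ω) [IsProbabilityMeasure μ]
    (t d : ℕ) (X : Matrix (Fin t) (Fin d) ℝ) (θ : Fin d → ℝ) (R : ℝ)
    (hZinv : IsUnit (Xᵀ * X).det)
    (hmin : ∀ y : Fin d → ℝ, R ^ 2 * (∑ i, y i ^ 2) ≤ y ⬝ᵥ (Xᵀ * X) *ᵥ y)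
    (x : Fin d → ℝ) (hx : Real.sqrt (∑ i, x i ^ 2) ≤ R)
    -- the weight vector w = X Z⁻¹ x
    (w : Fin t → ℝ) (hw : w = X *ᵥ ((Xᵀ * X)⁻¹ *ᵥ x))
    -- reward noise: iid standard Gaussian
    (η : Fin t → Ω → ℝ)
    (hindepη : iIndepFun η μ)
    (hgaussη : ∀ i, Measure.map (η i) μ = gaussianReal 0 1)
    -- compensating noise ξ ~ N(0, 1 - ‖w‖²), independent of η
    (ξ : Ω → ℝ)
    (hgaussξ : Measure.map ξ μ = gaussianReal 0 (Real.toNNReal (1 - ∑ j, w j ^ 2)))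
    (hindepξ : IndepFun (fun ω => (fun j => η j ω)) ξ μ)
    -- rewards r = Xθ + η
    (r : Fin t → Ω → ℝ) (hr : ∀ j ω, r j ω = (X *ᵥ θ) j + η j ω) :
    Measure.map (fun ω => (∑ j, r j ω * w j) + ξ ω) μ = gaussianReal (θ ⬝ᵥ x) 1 := by
  set y := (Xᵀ * X)⁻¹ *ᵥ x
  have hZy : (Xᵀ * X) *ᵥ y = x := by rw [mulVec_mulVec, mul_nonsing_inv _ hZinv, one_mulVec]
  have hmean : (X *ᵥ θ) ⬝ᵥ w = θ ⬝ᵥ x := by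
    rw [← hZy, ← mulVec_mulVec, ← hw, dotProduct_comm, dotProduct_transpose_mulVec]
  have hnorm : ∑ j, w j ^ 2 ≤ 1 := by
    rw [hw, sum_sq_mulVec, hZy]
    exact dotProduct_le_one_of_mulVec_eq hmin hZy (Real.sqrt_le_iff.mp hx).2
  simp only [hr]
  rw [map_sum_add_mul_add_eq_gaussianReal hindepη hgaussη hgaussξ hindepξ, hmean,
    ← Real.toNNReal_add (by positivity) (sub_nonneg.mpr hnorm), add_sub_cancel, Real.toNNReal_one]

theorem stmt_17 {Ω : Type*} [MeasurableSpace Ω] (μ : Measure Ω) [IsProbabilityMeasure μ]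
    (t d : ℕ) (X : Matrix (Fin t) (Fin d) ℝ) (θ : Fin d → ℝ) (R : ℝ) (hR : 0 < R)
    (hZinv : IsUnit (Xᵀ * X).det)
    (hmin : ∀ y : Fin d → ℝ, R ^ 2 * (∑ i, y i ^ 2) ≤ y ⬝ᵥ (Xᵀ * X) *ᵥ y)
    (x : Fin d → ℝ) (hx : Real.sqrt (∑ i, x i ^ 2) ≤ R)
    -- the weight vector w = X Z⁻¹ x
    (w : Fin t → ℝ) (hw : w = X *ᵥ ((Xᵀ * X)⁻¹ *ᵥ x))
    -- reward noise: iid standard Gaussian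
    (η : Fin t → Ω → ℝ) (hmeasη : ∀ i, Measurable (η i))
    (hindepη : iIndepFun η μ)
    (hgaussη : ∀ i, Measure.map (η i) μ = gaussianReal 0 1)
    -- compensating noise ξ ~ N(0, 1 - ‖w‖²), independent of η
    (ξ : Ω → ℝ) (hmeasξ : Measurable ξ)
    (hgaussξ : Measure.map ξ μ = gaussianReal 0 (Real.toNNReal (1 - ∑ j, w j ^ 2)))
    (hindepξ : IndepFun (fun ω => (fun j => η j ω)) ξ μ)
    -- rewards r = Xθ + η
    (r : Fin t → Ω → ℝ) (hr : ∀ j ω, r j ω = (X *ᵥ θ) j + η j ω) :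
    Measure.map (fun ω => (∑ j, r j ω * w j) + ξ ω) μ = gaussianReal (θ ⬝ᵥ x) 1 :=
  stmt_17_general μ t d X θ R hZinv hmin x hx w hw η hindepη hgaussη ξ hgaussξ hindepξ r hr
end

section
/- Let X = Σ_{i=1}^n G_i be a sum of n independent geometric random variables with success probability p ∈ (0,1) (each G_i ≥ 1 counts trials until first success). Then for any c ≥ 1, P(X ≥ c·E[X]) ≤ exp(-n(c - 1 - log c)). -/
/-! Chernoff's bound at `t = p (1 - 1/c)`. A geometric variable on `{1, 2, …}` has moment
generating function `p e^t / (1 - (1 - p) e^t)`, and at this `t` the identity `c t = p (c - 1)`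
together with `e^t (1 - t) ≤ 1` bounds it by `c`. Hence
`P(X ≥ c n / p) ≤ e^{-t c n / p} c^n = e^{-n (c - 1 - log c)}`. -/

open MeasureTheory ProbabilityTheory Real

namespace ProbabilityTheory

section ShiftedGeometric

variable {p : unitInterval} {s : ℝ}

lemma hasSum_mul_exp_mul_succ_geometric (hs : (1 - p) * exp s < 1) :
    HasSum (fun n : ℕ => ((1 - p : ℝ) ^ n * p) * exp (s * (n + 1 : ℕ)))
      (p * exp s / (1 - (1 - p) * exp s)) := by
  have hr : 0 ≤ (1 - p : ℝ) * exp s := mul_nonneg (by simp [p.2.2]) (exp_pos s).le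
  have hterm (n : ℕ) : ((1 - p : ℝ) ^ n * p) * exp (s * (n + 1 : ℕ)) =
      p * exp s * ((1 - p) * exp s) ^ n := by
    rw [mul_pow, ← exp_nat_mul, Nat.cast_succ, mul_add_one, exp_add, mul_comm s]
    ring
  simpa only [hterm, div_eq_mul_inv] using
    (hasSum_geometric_of_lt_one hr hs).mul_left ((p : ℝ) * exp s)

lemma integrable_exp_mul_succ_geometricMeasure (hp : p ≠ 0) (hs : (1 - p) * exp s < 1) :
    Integrable (fun n : ℕ => exp (s * (n + 1 : ℕ))) (geometricMeasure p) :=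
  (integrable_geometricMeasure_iff hp).2 <| by
    simpa only [norm_of_nonneg (exp_pos _).le] using
      (hasSum_mul_exp_mul_succ_geometric hs).summable

lemma integral_exp_mul_succ_geometricMeasure (hp : p ≠ 0) (hs : (1 - p) * exp s < 1) :
    ∫ n, exp (s * (n + 1 : ℕ)) ∂geometricMeasure p = p * exp s / (1 - (1 - p) * exp s) := by
  have h := hasSum_integral_geometricMeasure hp (integrable_exp_mul_succ_geometricMeasure hp hs)
  simp only [smul_eq_mul] at h
  exact h.unique (hasSum_mul_exp_mul_succ_geometric hs)

variable {Ω : Type*} [MeasurableSpace Ω] {μ : Measure Ω} {G : Ω → ℕ}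

/- `geometricMeasure p` counts the failures before the first success, so a geometric variable on
`{1, 2, …}` has law `(geometricMeasure p).map (· + 1)`. -/
lemma map_eq_map_succ_geometricMeasure (hG : Measurable G) (hp : p ≠ 0)
    (h0 : μ {ω | G ω = 0} = 0)
    (hsucc : ∀ n : ℕ, μ {ω | G ω = n + 1} = ENNReal.ofReal ((1 - p) ^ n * p)) :
    μ.map G = (geometricMeasure p).map (· + 1) := by
  refine Measure.ext_iff_singleton.2 fun k => ?_
  rw [Measure.map_apply hG (measurableSet_singleton k),
    Measure.map_apply (measurable_of_countable _) (measurableSet_singleton k)]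
  rcases k with _ | n
  · have hempty : (· + 1) ⁻¹' {0} = (∅ : Set ℕ) := by ext; simp
    rw [hempty, measure_empty]
    exact h0
  · have hpre : (· + 1) ⁻¹' {n + 1} = ({n} : Set ℕ) := by ext; simp
    rw [hpre, geometricMeasure_singleton hp]
    exact hsucc n

lemma integrable_exp_mul_of_map_eq_map_succ_geometricMeasure (hG : Measurable G) (hp : p ≠ 0)
    (hlaw : μ.map G = (geometricMeasure p).map (· + 1)) (hs : (1 - p) * exp s < 1) :
    Integrable (fun ω => exp (s * G ω)) μ := by
  have h : Integrable (fun k : ℕ => exp (s * k)) ((geometricMeasure p).map (· + 1)) :=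
    (integrable_map_measure .of_discrete (measurable_of_countable _).aemeasurable).2
      (integrable_exp_mul_succ_geometricMeasure hp hs)
  rw [← hlaw] at h
  exact (integrable_map_measure .of_discrete hG.aemeasurable).1 h

lemma mgf_of_map_eq_map_succ_geometricMeasure (hG : Measurable G) (hp : p ≠ 0)
    (hlaw : μ.map G = (geometricMeasure p).map (· + 1)) (hs : (1 - p) * exp s < 1) :
    mgf (fun ω => (G ω : ℝ)) μ s = p * exp s / (1 - (1 - p) * exp s) := by
  rw [← integral_exp_mul_succ_geometricMeasure hp hs, mgf,
    ← integral_map (f := fun k : ℕ => exp (s * k)) hG.aemeasurable .of_discrete, hlaw,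
    integral_map (measurable_of_countable _).aemeasurable .of_discrete]

end ShiftedGeometric

lemma measure_sum_ge_le_of_mgf_le {Ω ι : Type*} [MeasurableSpace Ω] {μ : Measure Ω}
    [IsFiniteMeasure μ] [Fintype ι] {X : ι → Ω → ℝ} (hindep : iIndepFun X μ)
    (hmeas : ∀ i, Measurable (X i)) {t M : ℝ} (ht : 0 ≤ t)
    (hint : ∀ i, Integrable (fun ω => exp (t * X i ω)) μ) (hM : ∀ i, mgf (X i) μ t ≤ M) (a : ℝ) :
    μ.real {ω | a ≤ ∑ i, X i ω} ≤ exp (-t * a) * M ^ Fintype.card ι := by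
  have hchernoff := measure_ge_le_exp_mul_mgf (X := ∑ i, X i) a ht
    (hindep.integrable_exp_mul_sum hmeas fun i _ => hint i)
  simp only [Finset.sum_apply, hindep.mgf_sum hmeas] at hchernoff
  refine hchernoff.trans (mul_le_mul_of_nonneg_left ?_ (exp_pos _).le)
  calc ∏ i, mgf (X i) μ t ≤ ∏ _i : ι, M :=
        Finset.prod_le_prod (fun i _ => mgf_nonneg) fun i _ => hM i
    _ = M ^ Fintype.card ι := by rw [Finset.prod_const, Finset.card_univ]

end ProbabilityTheory

lemma one_sub_mul_exp_lt_one {p s : ℝ} (hs : s < p) : (1 - p) * exp s < 1 := by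
  have h := add_one_le_exp (-s)
  calc (1 - p) * exp s < (1 - s) * exp s := by gcongr
    _ ≤ exp (-s) * exp s := by gcongr; linarith
    _ = 1 := by rw [← exp_add, neg_add_cancel, exp_zero]

lemma mul_exp_div_le_of_mul_eq {p c s : ℝ} (hc : 0 < c) (hs : c * s = p * (c - 1))
    (hlt : (1 - p) * exp s < 1) :
    p * exp s / (1 - (1 - p) * exp s) ≤ c := by
  rw [div_le_iff₀ (by linarith)]
  have h := add_one_le_exp (-s)
  have hle : exp s * (1 - s) ≤ 1 := by
    calc exp s * (1 - s) ≤ exp s * exp (-s) := by gcongr; linarith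
      _ = 1 := by rw [← exp_add, add_neg_cancel, exp_zero]
  have key : c * (1 - (1 - p) * exp s) - p * exp s = c * (1 - exp s * (1 - s)) := by
    linear_combination (-exp s) * hs
  nlinarith [mul_nonneg hc.le (sub_nonneg.2 hle)]

theorem stmt_19_general {Ω : Type*} [MeasurableSpace Ω] (μ : Measure Ω) [IsProbabilityMeasure μ]
    (n : ℕ) (p : ℝ) (hp0 : 0 < p) (hp1 : p < 1)
    (G : Fin n → Ω → ℕ) (hmeas : ∀ i, Measurable (G i))
    (hindep : iIndepFun G μ)
    -- each G_i is geometric on {1, 2, ...}: P(G_i = k) = (1-p)^(k-1) p for k ≥ 1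
    (hgeom : ∀ i (k : ℕ), 1 ≤ k →
      μ {ω | G i ω = k} = ENNReal.ofReal ((1 - p) ^ (k - 1) * p))
    (hpos : ∀ i, μ {ω | G i ω = 0} = 0)
    (c : ℝ) (hc : 1 ≤ c) :
    μ {ω | c * ((n : ℝ) / p) ≤ ∑ i, (G i ω : ℝ)}
      ≤ ENNReal.ofReal (Real.exp (-(n : ℝ) * (c - 1 - Real.log c))) := by
  set P : unitInterval := ⟨p, hp0.le, hp1.le⟩
  have hP : P ≠ 0 := fun h => hp0.ne' (congrArg Subtype.val h)
  have hc0 : 0 < c := by linarith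
  set s := p * (c - 1) / c with hs
  have hs0 : 0 ≤ s := div_nonneg (mul_nonneg hp0.le (by linarith)) hc0.le
  have hlt : (1 - p) * exp s < 1 := one_sub_mul_exp_lt_one <| by
    rw [hs, div_lt_iff₀ hc0]
    linarith
  have hlaw i : μ.map (G i) = (geometricMeasure P).map (· + 1) :=
    map_eq_map_succ_geometricMeasure (hmeas i) hP (hpos i) fun k => by
      simpa using hgeom i (k + 1) (by omega)
  have hmgf i : mgf (fun ω => (G i ω : ℝ)) μ s ≤ c := by
    rw [mgf_of_map_eq_map_succ_geometricMeasure (hmeas i) hP (hlaw i) hlt]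
    exact mul_exp_div_le_of_mul_eq (p := p) hc0 (by rw [hs]; field_simp) hlt
  have htail := measure_sum_ge_le_of_mgf_le
    (hindep.comp (fun _ k => (k : ℝ)) fun _ => measurable_of_countable _)
    (fun i => (measurable_of_countable _).comp (hmeas i)) hs0
    (fun i => integrable_exp_mul_of_map_eq_map_succ_geometricMeasure (hmeas i) hP (hlaw i) hlt)
    hmgf (c * (n / p))
  have hexponent : exp (-s * (c * (n / p))) * c ^ n = exp (-n * (c - 1 - log c)) := by
    rw [← exp_log (pow_pos hc0 n), ← exp_add, log_pow, hs]
    congr 1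
    field_simp
    ring
  rw [Fintype.card_fin, hexponent] at htail
  rw [ENNReal.le_ofReal_iff_toReal_le (measure_ne_top _ _) (exp_pos _).le]
  exact htail

theorem stmt_19 {Ω : Type*} [MeasurableSpace Ω] (μ : Measure Ω) [IsProbabilityMeasure μ]
    (n : ℕ) (hn : 0 < n) (p : ℝ) (hp0 : 0 < p) (hp1 : p < 1)
    (G : Fin n → Ω → ℕ) (hmeas : ∀ i, Measurable (G i))
    (hindep : iIndepFun G μ)
    -- each G_i is geometric on {1, 2, ...}: P(G_i = k) = (1-p)^(k-1) p for k ≥ 1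
    (hgeom : ∀ i (k : ℕ), 1 ≤ k →
      μ {ω | G i ω = k} = ENNReal.ofReal ((1 - p) ^ (k - 1) * p))
    (hpos : ∀ i, μ {ω | G i ω = 0} = 0)
    (c : ℝ) (hc : 1 ≤ c) :
    μ {ω | c * ((n : ℝ) / p) ≤ ∑ i, (G i ω : ℝ)}
      ≤ ENNReal.ofReal (Real.exp (-(n : ℝ) * (c - 1 - Real.log c))) :=
  stmt_19_general μ n p hp0 hp1 G hmeas hindep hgeom hpos c hc
end
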